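/- Let μ > 2 be a real number. Every element g of the subgroup Γ_μ of SL(2, ℝ) that is not conjugate within Γ_μ to a power of γ₁(μ) or to a power of γ₂(μ) satisfies |trace(g)| ≥ μ² - 2, and equality holds if and only if g is conjugate within Γ_μ to (γ₁(μ)γ₂(μ))^(±1). -/

import Mathlib

open Matrix
open scoped MatrixGroups

/-- The parabolic matrix `γ₁(μ) = !![1, μ; 0, 1]` in `SL(2, ℝ)`. -/
def gamma1 (μ : ℝ) : SL(2, ℝ) :=
  ⟨!![1, μ; 0, 1], by norm_num [Matrix.det_fin_two_of]⟩

/-- The parabolic matrix `γ₂(μ) = !![1, 0; -μ, 1]` in `SL(2, ℝ)`. -/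
def gamma2 (μ : ℝ) : SL(2, ℝ) :=
  ⟨!![1, 0; -μ, 1], by norm_num [Matrix.det_fin_two_of]⟩

/-- `Γ_μ`, the subgroup of `SL(2, ℝ)` generated by `γ₁(μ)` and `γ₂(μ)`. -/
def Gamma (μ : ℝ) : Subgroup (Matrix.SpecialLinearGroup (Fin 2) ℝ) :=
  Subgroup.closure {gamma1 μ, gamma2 μ}

/-!
Every element of `Γ_μ` is a product of blocks `γ₁(μ)^m γ₂(μ)^n`. Merging adjacent powers of the
same generator, also cyclically (a cyclic rotation of the word is a conjugation inside `Γ_μ`),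
one reaches either a single power of `γ₁(μ)` or `γ₂(μ)`, or a product of `k ≥ 1` blocks with all
exponents nonzero.

With `E z = !![z, 1; 1, 0]` one has `γ₁(μ)^m γ₂(μ)^n = E (m μ) * E (-n μ)`, so such a product is
`M = E z₁ ⋯ E z₂ₖ` with all `|zᵢ| ≥ μ > 2`. Replacing `N` by `E z * N` with `|z| ≥ μ` raises the
first-column gap `|N₀₀| - |N₁₀|` by at least `(μ - 2) |N₀₀|`, and `|tr M| ≥ |M₀₀| - |M₁₁|` is the
sum of the first-column gaps of `M` and of `E z₂ₖ ⋯ E z₂`. This gives `|tr M| ≥ μ² - 2`, strictly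
if `k ≥ 2`; for `k = 1` the trace is `2 - m n μ²`, of absolute value `μ² - 2` only when `m n = 1`.
-/

section BlockProd

variable {G : Type*} [Group G] (a b : G)

def blockProd (L : List (ℤ × ℤ)) : G := (L.map fun p => a ^ p.1 * b ^ p.2).prod

@[simp] lemma blockProd_nil : blockProd a b [] = 1 := rfl

@[simp] lemma blockProd_cons (p : ℤ × ℤ) (L : List (ℤ × ℤ)) :
    blockProd a b (p :: L) = a ^ p.1 * b ^ p.2 * blockProd a b L := rfl

@[simp] lemma blockProd_append (L M : List (ℤ × ℤ)) :
    blockProd a b (L ++ M) = blockProd a b L * blockProd a b M := by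
  simp [blockProd]

lemma blockProd_mem_closure (L : List (ℤ × ℤ)) : blockProd a b L ∈ Subgroup.closure {a, b} := by
  have ha : a ∈ Subgroup.closure {a, b} := Subgroup.subset_closure (by simp)
  have hb : b ∈ Subgroup.closure {a, b} := Subgroup.subset_closure (by simp)
  induction L with
  | nil => exact one_mem _
  | cons p L ih => exact mul_mem (mul_mem (zpow_mem ha _) (zpow_mem hb _)) ih

lemma exists_blockProd_eq {g : G} (hg : g ∈ Subgroup.closure {a, b}) :
    ∃ L, blockProd a b L = g := by
  induction hg using Subgroup.closure_induction'' with
  | mem x hx =>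
    rcases hx with rfl | rfl
    · exact ⟨[(1, 0)], by simp⟩
    · exact ⟨[(0, 1)], by simp⟩
  | inv_mem x hx =>
    rcases hx with rfl | rfl
    · exact ⟨[(-1, 0)], by simp⟩
    · exact ⟨[(0, -1)], by simp⟩
  | one => exact ⟨[], rfl⟩
  | mul x y _ _ hx hy =>
    obtain ⟨L, rfl⟩ := hx
    obtain ⟨M, rfl⟩ := hy
    exact ⟨L ++ M, blockProd_append a b L M⟩

lemma blockProd_append_eq_conj (L M : List (ℤ × ℤ)) :
    blockProd a b (L ++ M) = blockProd a b L * blockProd a b (M ++ L) * (blockProd a b L)⁻¹ := by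
  simp [mul_assoc]

lemma blockProd_cons_cons_of_snd_eq_zero {p : ℤ × ℤ} (hp : p.2 = 0) (q : ℤ × ℤ)
    (L : List (ℤ × ℤ)) :
    blockProd a b (p :: q :: L) = blockProd a b ((p.1 + q.1, q.2) :: L) := by
  simp [hp, _root_.zpow_add, mul_assoc]

lemma blockProd_append_pair_of_fst_eq_zero (L : List (ℤ × ℤ)) (q : ℤ × ℤ) {p : ℤ × ℤ}
    (hp : p.1 = 0) :
    blockProd a b (L ++ [q, p]) = blockProd a b (L ++ [(q.1, q.2 + p.2)]) := by
  simp [hp, _root_.zpow_add, mul_assoc]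

def IsConjPowOrBlockProd (g : G) : Prop :=
  ∃ h ∈ Subgroup.closure {a, b},
    (∃ n : ℤ, g = h * a ^ n * h⁻¹ ∨ g = h * b ^ n * h⁻¹) ∨
    ∃ B : List (ℤ × ℤ), B ≠ [] ∧ (∀ p ∈ B, p.1 ≠ 0 ∧ p.2 ≠ 0) ∧ g = h * blockProd a b B * h⁻¹

variable {a b}

lemma IsConjPowOrBlockProd.conj {g x : G} (hg : IsConjPowOrBlockProd a b g)
    (hx : x ∈ Subgroup.closure {a, b}) : IsConjPowOrBlockProd a b (x * g * x⁻¹) := by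
  obtain ⟨h, hh, ⟨n, rfl | rfl⟩ | ⟨B, hB, hB0, rfl⟩⟩ := hg
  · exact ⟨x * h, mul_mem hx hh, Or.inl ⟨n, Or.inl (by group)⟩⟩
  · exact ⟨x * h, mul_mem hx hh, Or.inl ⟨n, Or.inr (by group)⟩⟩
  · exact ⟨x * h, mul_mem hx hh, Or.inr ⟨B, hB, hB0, by group⟩⟩

lemma isConjPowOrBlockProd_zpow_left (n : ℤ) : IsConjPowOrBlockProd a b (a ^ n) :=
  ⟨1, one_mem _, Or.inl ⟨n, Or.inl (by group)⟩⟩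

lemma isConjPowOrBlockProd_zpow_right (n : ℤ) : IsConjPowOrBlockProd a b (b ^ n) :=
  ⟨1, one_mem _, Or.inl ⟨n, Or.inr (by group)⟩⟩

lemma isConjPowOrBlockProd_blockProd (L : List (ℤ × ℤ)) :
    IsConjPowOrBlockProd a b (blockProd a b L) := by
  induction hn : L.length using Nat.strong_induction_on generalizing L with
  | _ n ih =>
  subst hn
  by_cases h0 : ∀ p ∈ L, p.1 ≠ 0 ∧ p.2 ≠ 0
  · by_cases hL : L = []
    · simpa [hL] using isConjPowOrBlockProd_zpow_left (a := a) (b := b) 0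
    · exact ⟨1, one_mem _, Or.inr ⟨L, hL, h0, by group⟩⟩
  obtain ⟨p, hpL, hp⟩ : ∃ p ∈ L, p.1 = 0 ∨ p.2 = 0 := by
    simpa only [not_forall, not_and_or, not_not, exists_prop] using h0
  obtain ⟨s, t, rfl⟩ := List.append_of_mem hpL
  rcases hp with hp1 | hp2
  · -- move `p` to the back and absorb `b ^ p.2` into the preceding block
    rw [show s ++ p :: t = (s ++ [p]) ++ t by simp, blockProd_append_eq_conj]
    refine .conj ?_ (blockProd_mem_closure a b _)
    rcases (t ++ s).eq_nil_or_concat' with hts | ⟨r, q, hts⟩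
    · simpa [← List.append_assoc, hts, hp1] using isConjPowOrBlockProd_zpow_right p.2
    · rw [← List.append_assoc, hts, List.append_assoc, List.singleton_append,
        blockProd_append_pair_of_fst_eq_zero a b r q hp1]
      refine ih _ ?_ _ rfl
      have := congrArg List.length hts
      simp only [List.length_append, List.length_cons] at this ⊢
      omega
  · -- move `p` to the front and absorb `a ^ p.1` into the following block
    rw [blockProd_append_eq_conj]
    refine .conj ?_ (blockProd_mem_closure a b _)
    rcases hts : t ++ s with _ | ⟨q, r⟩
    · simpa [hts, hp2] using isConjPowOrBlockProd_zpow_left p.1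
    · rw [List.cons_append, hts, blockProd_cons_cons_of_snd_eq_zero a b hp2]
      refine ih _ ?_ _ rfl
      have := congrArg List.length hts
      simp only [List.length_append, List.length_cons] at this ⊢
      omega

theorem isConjPowOrBlockProd_of_mem_closure {g : G} (hg : g ∈ Subgroup.closure {a, b}) :
    IsConjPowOrBlockProd a b g := by
  obtain ⟨L, rfl⟩ := exists_blockProd_eq a b hg
  exact isConjPowOrBlockProd_blockProd L

end BlockProd

section Continuant

variable {R : Type*} [CommRing R]

def continuantMatrix (l : List R) : Matrix (Fin 2) (Fin 2) R :=
  (l.map fun z => !![z, 1; 1, 0]).prod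

@[simp] lemma continuantMatrix_nil : continuantMatrix ([] : List R) = 1 := rfl

lemma continuantMatrix_cons (z : R) (l : List R) :
    continuantMatrix (z :: l) = !![z, 1; 1, 0] * continuantMatrix l := rfl

lemma continuantMatrix_cons_apply (z : R) (l : List R) :
    continuantMatrix (z :: l) 0 0 = z * continuantMatrix l 0 0 + continuantMatrix l 1 0 ∧
      continuantMatrix (z :: l) 1 0 = continuantMatrix l 0 0 ∧
      continuantMatrix (z :: l) 1 1 = continuantMatrix l 0 1 := by
  simp [continuantMatrix_cons, mul_apply, Fin.sum_univ_two]

lemma continuantMatrix_reverse (l : List R) :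
    continuantMatrix l.reverse = (continuantMatrix l)ᵀ := by
  induction l with
  | nil => simp
  | cons z l ih =>
    have hE : (!![z, 1; 1, 0] : Matrix (Fin 2) (Fin 2) R)ᵀ = !![z, 1; 1, 0] := by
      ext i j; fin_cases i <;> fin_cases j <;> rfl
    rw [List.reverse_cons, continuantMatrix, List.map_append, List.prod_append, ← continuantMatrix,
      ih, continuantMatrix_cons, transpose_mul, hE]
    simp

lemma trace_continuantMatrix_pair (z w : R) : trace (continuantMatrix [z, w]) = z * w + 2 := by
  simp [continuantMatrix, trace_fin_two]
  ring

variable [LinearOrder R] [IsStrictOrderedRing R]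

def continuantGap (l : List R) : R :=
  |continuantMatrix l 0 0| - |continuantMatrix l 1 0|

variable {x : R}

lemma le_continuantGap_cons {z : R} (hz : x ≤ |z|) (l : List R) :
    continuantGap l + (x - 2) * |continuantMatrix l 0 0| ≤ continuantGap (z :: l) := by
  obtain ⟨h00, h10, -⟩ := continuantMatrix_cons_apply z l
  have := abs_sub (z * continuantMatrix l 0 0 + continuantMatrix l 1 0) (continuantMatrix l 1 0)
  rw [add_sub_cancel_right, abs_mul] at this
  rw [continuantGap, continuantGap, h00, h10]
  nlinarith [abs_nonneg (continuantMatrix l 0 0)]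

lemma one_le_continuantGap (hx : 2 ≤ x) {l : List R} (hl : ∀ y ∈ l, x ≤ |y|) :
    1 ≤ continuantGap l := by
  induction l with
  | nil => simp [continuantGap]
  | cons z l ih =>
    have := le_continuantGap_cons (hl z List.mem_cons_self) l
    have := ih fun y hy => hl y (List.mem_cons_of_mem z hy)
    nlinarith [abs_nonneg (continuantMatrix l 0 0)]

lemma one_le_abs_continuantMatrix (hx : 2 ≤ x) {l : List R} (hl : ∀ y ∈ l, x ≤ |y|) :
    1 ≤ |continuantMatrix l 0 0| := by
  have := one_le_continuantGap hx hl
  rw [continuantGap] at this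
  linarith [abs_nonneg (continuantMatrix l 1 0)]

lemma sub_one_le_continuantGap_cons (hx : 2 ≤ x) {z : R} {l : List R}
    (hl : ∀ y ∈ z :: l, x ≤ |y|) : x - 1 ≤ continuantGap (z :: l) := by
  have hl' : ∀ y ∈ l, x ≤ |y| := fun y hy => hl y (List.mem_cons_of_mem z hy)
  nlinarith [le_continuantGap_cons (hl z List.mem_cons_self) l, one_le_continuantGap hx hl',
    one_le_abs_continuantMatrix hx hl']

lemma le_abs_continuantMatrix_cons (hx : 2 ≤ x) {z : R} {l : List R}
    (hl : ∀ y ∈ z :: l, x ≤ |y|) : x ≤ |continuantMatrix (z :: l) 0 0| := by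
  have hl' : ∀ y ∈ l, x ≤ |y| := fun y hy => hl y (List.mem_cons_of_mem z hy)
  have := sub_one_le_continuantGap_cons hx hl
  rw [continuantGap, (continuantMatrix_cons_apply z l).2.1] at this
  linarith [one_le_abs_continuantMatrix hx hl']

lemma sub_one_lt_continuantGap_cons_cons (hx : 2 < x) {z w : R} {l : List R}
    (hl : ∀ y ∈ z :: w :: l, x ≤ |y|) : x - 1 < continuantGap (z :: w :: l) := by
  have hl' : ∀ y ∈ w :: l, x ≤ |y| := fun y hy => hl y (List.mem_cons_of_mem z hy)
  nlinarith [le_continuantGap_cons (hl z List.mem_cons_self) (w :: l),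
    sub_one_le_continuantGap_cons hx.le hl', le_abs_continuantMatrix_cons hx.le hl']

lemma continuantGap_add_continuantGap_reverse_le_abs_trace (z : R) (l : List R) :
    continuantGap (z :: l) + continuantGap l.reverse ≤ |trace (continuantMatrix (z :: l))| := by
  obtain ⟨-, h10, h11⟩ := continuantMatrix_cons_apply z l
  have := abs_sub_abs_le_abs_sub (continuantMatrix (z :: l) 0 0) (-continuantMatrix (z :: l) 1 1)
  rw [sub_neg_eq_add, abs_neg] at this
  rw [continuantGap, continuantGap, continuantMatrix_reverse, transpose_apply, transpose_apply, h10,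
    ← h11, trace_fin_two]
  linarith

lemma continuantGap_add_le_abs_trace (hx : 2 ≤ x) {z w : R} {l : List R}
    (hl : ∀ y ∈ z :: w :: l, x ≤ |y|) :
    continuantGap (w :: l) + (x ^ 2 - x - 1) ≤ |trace (continuantMatrix (z :: w :: l))| := by
  have hl' : ∀ y ∈ w :: l, x ≤ |y| := fun y hy => hl y (List.mem_cons_of_mem z hy)
  obtain ⟨v, m, hvm⟩ : ∃ v m, (w :: l).reverse = v :: m := List.exists_cons_of_ne_nil (by simp)
  have hrev := sub_one_le_continuantGap_cons hx (l := m) (z := v) fun y hy =>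
    hl' y (List.mem_reverse.mp (hvm ▸ hy))
  rw [← hvm] at hrev
  nlinarith [continuantGap_add_continuantGap_reverse_le_abs_trace z (w :: l),
    le_continuantGap_cons (hl z List.mem_cons_self) (w :: l), le_abs_continuantMatrix_cons hx hl']

lemma sq_sub_two_le_abs_trace_continuantMatrix (hx : 2 ≤ x) {z w : R} {l : List R}
    (hl : ∀ y ∈ z :: w :: l, x ≤ |y|) :
    x ^ 2 - 2 ≤ |trace (continuantMatrix (z :: w :: l))| := by
  linarith [continuantGap_add_le_abs_trace hx hl,
    sub_one_le_continuantGap_cons hx fun y hy => hl y (List.mem_cons_of_mem z hy)]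

lemma sq_sub_two_lt_abs_trace_continuantMatrix (hx : 2 < x) {z w u : R} {l : List R}
    (hl : ∀ y ∈ z :: w :: u :: l, x ≤ |y|) :
    x ^ 2 - 2 < |trace (continuantMatrix (z :: w :: u :: l))| := by
  linarith [continuantGap_add_le_abs_trace hx.le hl,
    sub_one_lt_continuantGap_cons_cons hx fun y hy => hl y (List.mem_cons_of_mem z hy)]

end Continuant

section ParabolicGenerators

lemma gamma1_add (s t : ℝ) : gamma1 (s + t) = gamma1 s * gamma1 t := by
  apply Subtype.ext
  rw [Matrix.SpecialLinearGroup.coe_mul]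
  simp [gamma1, add_comm]

lemma gamma2_add (s t : ℝ) : gamma2 (s + t) = gamma2 s * gamma2 t := by
  apply Subtype.ext
  rw [Matrix.SpecialLinearGroup.coe_mul]
  simp [gamma2, add_comm]

lemma gamma1_zpow (μ : ℝ) (n : ℤ) : gamma1 μ ^ n = gamma1 (n * μ) := by
  simpa using (map_zpow (MonoidHom.mk' (fun t : Multiplicative ℝ => gamma1 t.toAdd)
    fun s t => gamma1_add s.toAdd t.toAdd) (.ofAdd μ) n).symm

lemma gamma2_zpow (μ : ℝ) (n : ℤ) : gamma2 μ ^ n = gamma2 (n * μ) := by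
  simpa using (map_zpow (MonoidHom.mk' (fun t : Multiplicative ℝ => gamma2 t.toAdd)
    fun s t => gamma2_add s.toAdd t.toAdd) (.ofAdd μ) n).symm

lemma Matrix.SpecialLinearGroup.trace_conj {n R : Type*} [Fintype n] [DecidableEq n] [CommRing R]
    (h g : SpecialLinearGroup n R) :
    trace (↑(h * g * h⁻¹) : Matrix n n R) = trace (↑g : Matrix n n R) := by
  rw [coe_mul, coe_mul, trace_mul_cycle, ← coe_mul, inv_mul_cancel, coe_one, one_mul]

lemma Matrix.SpecialLinearGroup.trace_inv {R : Type*} [CommRing R] (g : SL(2, R)) :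
    trace (↑g⁻¹ : Matrix (Fin 2) (Fin 2) R) = trace (↑g : Matrix (Fin 2) (Fin 2) R) := by
  rw [coe_inv, adjugate_fin_two, trace_fin_two, trace_fin_two]
  simp [add_comm]

lemma trace_gamma1_mul_gamma2 (μ : ℝ) :
    trace ((gamma1 μ * gamma2 μ : SL(2, ℝ)) : Matrix (Fin 2) (Fin 2) ℝ) = 2 - μ ^ 2 := by
  rw [Matrix.SpecialLinearGroup.coe_mul]
  simp [gamma1, gamma2, trace_fin_two]
  ring

def blockEntries (μ : ℝ) (B : List (ℤ × ℤ)) : List ℝ :=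
  B.flatMap fun p => [p.1 * μ, -(p.2 * μ)]

@[simp] lemma blockEntries_nil (μ : ℝ) : blockEntries μ [] = [] := rfl

@[simp] lemma blockEntries_cons (μ : ℝ) (p : ℤ × ℤ) (B : List (ℤ × ℤ)) :
    blockEntries μ (p :: B) = p.1 * μ :: -(p.2 * μ) :: blockEntries μ B := rfl

lemma coe_blockProd_gamma (μ : ℝ) (B : List (ℤ × ℤ)) :
    ((blockProd (gamma1 μ) (gamma2 μ) B : SL(2, ℝ)) : Matrix (Fin 2) (Fin 2) ℝ) =
      continuantMatrix (blockEntries μ B) := by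
  induction B with
  | nil => exact Matrix.SpecialLinearGroup.coe_one
  | cons p B ih =>
    rw [blockProd_cons, Matrix.SpecialLinearGroup.coe_mul, Matrix.SpecialLinearGroup.coe_mul, ih,
      gamma1_zpow, gamma2_zpow, blockEntries_cons, continuantMatrix_cons,
      continuantMatrix_cons, ← mul_assoc]
    congr 1
    simp [gamma1, gamma2, add_comm]

lemma le_abs_of_mem_blockEntries {μ : ℝ} (hμ : 0 ≤ μ) {B : List (ℤ × ℤ)}
    (hB : ∀ p ∈ B, p.1 ≠ 0 ∧ p.2 ≠ 0) : ∀ y ∈ blockEntries μ B, μ ≤ |y| := by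
  have key (m : ℤ) (hm : m ≠ 0) : μ ≤ |m * μ| := by
    rw [abs_mul, abs_of_nonneg hμ, ← Int.cast_abs]
    exact le_mul_of_one_le_left hμ (by exact_mod_cast Int.one_le_abs hm)
  intro y hy
  obtain ⟨p, hp, hy⟩ := List.mem_flatMap.mp hy
  rcases List.mem_pair.mp hy with rfl | rfl
  · exact key p.1 (hB p hp).1
  · exact (abs_neg (p.2 * μ)).symm ▸ key p.2 (hB p hp).2

lemma eq_one_of_abs_two_sub_mul_sq_eq {μ : ℝ} (hμ : 2 < μ) {k : ℤ} (hk : k ≠ 0)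
    (h : |2 - k * μ ^ 2| = μ ^ 2 - 2) : k = 1 := by
  rcases hk.lt_or_gt with hneg | hpos
  · have : (k : ℝ) ≤ -1 := by exact_mod_cast Int.le_sub_one_of_lt hneg
    rw [abs_of_pos (by nlinarith)] at h
    nlinarith
  · have : (1 : ℝ) ≤ k := by exact_mod_cast hpos
    rw [abs_of_neg (by nlinarith)] at h
    have : ((k : ℝ) - 1) * μ ^ 2 = 0 := by linarith
    have : (k : ℝ) = 1 := by nlinarith [sq_pos_of_pos (by linarith : (0 : ℝ) < μ)]
    exact_mod_cast this

variable {μ : ℝ} {B : List (ℤ × ℤ)}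

lemma sq_sub_two_le_abs_trace_blockProd (hμ : 2 < μ) (hB : B ≠ [])
    (hB0 : ∀ p ∈ B, p.1 ≠ 0 ∧ p.2 ≠ 0) :
    μ ^ 2 - 2 ≤
      |trace ((blockProd (gamma1 μ) (gamma2 μ) B : SL(2, ℝ)) : Matrix (Fin 2) (Fin 2) ℝ)| := by
  obtain ⟨p, B, rfl⟩ := List.exists_cons_of_ne_nil hB
  have hle := le_abs_of_mem_blockEntries (zero_le_two.trans hμ.le) hB0
  rw [blockEntries_cons] at hle
  rw [coe_blockProd_gamma, blockEntries_cons]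
  exact sq_sub_two_le_abs_trace_continuantMatrix hμ.le hle

lemma eq_of_abs_trace_blockProd_eq (hμ : 2 < μ) (hB : B ≠ [])
    (hB0 : ∀ p ∈ B, p.1 ≠ 0 ∧ p.2 ≠ 0)
    (h : |trace ((blockProd (gamma1 μ) (gamma2 μ) B : SL(2, ℝ)) : Matrix (Fin 2) (Fin 2) ℝ)| =
      μ ^ 2 - 2) :
    B = [(1, 1)] ∨ B = [(-1, -1)] := by
  have hle := le_abs_of_mem_blockEntries (zero_le_two.trans hμ.le) hB0
  rw [coe_blockProd_gamma] at h
  rcases B with _ | ⟨⟨m, n⟩, _ | ⟨q, B⟩⟩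
  · contradiction
  · obtain ⟨hm, hn⟩ := hB0 (m, n) List.mem_cons_self
    have hmn : m * n = 1 := by
      refine eq_one_of_abs_two_sub_mul_sq_eq hμ (mul_ne_zero hm hn) ?_
      rw [← h, blockEntries_cons, blockEntries_nil, trace_continuantMatrix_pair]
      push_cast
      ring_nf
    rcases Int.eq_one_or_neg_one_of_mul_eq_one' hmn with ⟨rfl, rfl⟩ | ⟨rfl, rfl⟩ <;> simp
  · rw [blockEntries_cons, blockEntries_cons] at hle h
    exact absurd h (sq_sub_two_lt_abs_trace_continuantMatrix hμ hle).ne'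

end ParabolicGenerators

/-- Let `μ > 2`. Every element `g` of `Γ_μ` that is not conjugate within `Γ_μ` to a power
of `γ₁(μ)` or to a power of `γ₂(μ)` satisfies `|trace(g)| ≥ μ² - 2`, and equality holds
if and only if `g` is conjugate within `Γ_μ` to `(γ₁(μ)γ₂(μ))^(±1)`. -/
theorem stmt5 (μ : ℝ) (hμ : 2 < μ) (g : SL(2, ℝ)) (hg : g ∈ Gamma μ)
    (hnot : ¬ ∃ h ∈ Gamma μ, ∃ n : ℤ,
      g = h * (gamma1 μ) ^ n * h⁻¹ ∨ g = h * (gamma2 μ) ^ n * h⁻¹) :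
    μ ^ 2 - 2 ≤ |Matrix.trace (g : Matrix (Fin 2) (Fin 2) ℝ)| ∧
    (|Matrix.trace (g : Matrix (Fin 2) (Fin 2) ℝ)| = μ ^ 2 - 2 ↔
      ∃ h ∈ Gamma μ,
        g = h * (gamma1 μ * gamma2 μ) * h⁻¹ ∨ g = h * (gamma1 μ * gamma2 μ)⁻¹ * h⁻¹) := by
  obtain ⟨h, hh, hpow | ⟨B, hB, hB0, rfl⟩⟩ := isConjPowOrBlockProd_of_mem_closure hg
  · exact absurd ⟨h, hh, hpow⟩ hnot
  have htr : |trace ((gamma1 μ * gamma2 μ : SL(2, ℝ)) : Matrix (Fin 2) (Fin 2) ℝ)| = μ ^ 2 - 2 := by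
    rw [trace_gamma1_mul_gamma2, abs_sub_comm, abs_of_pos (by nlinarith)]
  rw [SpecialLinearGroup.trace_conj]
  refine ⟨sq_sub_two_le_abs_trace_blockProd hμ hB hB0, fun heq => ?_, ?_⟩
  · rcases eq_of_abs_trace_blockProd_eq hμ hB hB0 heq with rfl | rfl
    · exact ⟨h, hh, Or.inl (by simp)⟩
    · have hγ : (gamma1 μ)⁻¹ ∈ Gamma μ := inv_mem (Subgroup.subset_closure (by simp))
      refine ⟨h * (gamma1 μ)⁻¹, mul_mem hh hγ, Or.inr ?_⟩
      simp only [blockProd_cons, blockProd_nil, mul_one]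
      group
  · rintro ⟨h', -, hg' | hg'⟩ <;>
      rw [← SpecialLinearGroup.trace_conj h, hg', SpecialLinearGroup.trace_conj]
    · exact htr
    · rwa [SpecialLinearGroup.trace_inv]
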